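/- If each filter q_l is finitely supported and the family {q_1,…,q_m} satisfies Σ_{l=1}^m Σ_k q_l[n+k] q_l[k] = δ_n, then the analysis operator W built from these filters is an isometry on ℓ²(ℤ): ‖Wu‖² = ‖u‖² for all u ∈ ℓ²(ℤ). -/

import Mathlib

/-!
Expanding the square, `∑_k (∑_j q[j-k] u[j])²` becomes `∑_n a_q[n] a_u[n]`, where `a_v` is the
autocorrelation `a_v[n] = ∑_k v[n+k] v[k]`; the interchange of sums is legitimate because `q` is
finitely supported and the shifted products of a square-summable `u` are summable. Summing over
the filters, the UEP condition says `∑_l a_{q_l} = δ`, which leaves `a_u[0] = ‖u‖²`.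
-/

open Function

noncomputable def autocorr (v : ℤ → ℝ) (n : ℤ) : ℝ := ∑' k, v (n + k) * v k

theorem autocorr_zero (v : ℤ → ℝ) : autocorr v 0 = ∑' k, v k ^ 2 := by
  simp [autocorr, sq]

theorem tsum_mul_comp_add_eq_autocorr (v : ℤ → ℝ) (s t : ℤ) :
    ∑' k, v (s + k) * v (t + k) = autocorr v (s - t) := by
  rw [autocorr, ← (Equiv.addLeft t).tsum_eq (fun k => v (s - t + k) * v k)]
  simp only [Equiv.coe_addLeft, sub_add_cancel, ← add_assoc]

theorem summable_mul_comp_add {v : ℤ → ℝ} (hv : Summable fun k => v k ^ 2) (s t : ℤ) :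
    Summable fun k => v (s + k) * v (t + k) := by
  have shift (r : ℤ) : Summable fun k => v (r + k) ^ 2 :=
    hv.comp_injective (add_right_injective r)
  refine ((shift s).add (shift t)).of_norm_bounded fun k => ?_
  have := two_mul_le_add_sq |v (s + k)| |v (t + k)|
  rw [sq_abs, sq_abs] at this
  rw [Real.norm_eq_abs, abs_mul]
  linarith [mul_nonneg (abs_nonneg (v (s + k))) (abs_nonneg (v (t + k)))]

section FinitelySupported

variable {q : ℤ → ℝ} (hq : (support q).Finite)
include hq

theorem autocorr_eq_sum (n : ℤ) : autocorr q n = ∑ t ∈ hq.toFinset, q (n + t) * q t :=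
  tsum_eq_sum' fun t ht => by
    simpa using right_ne_zero_of_mul (mem_support.1 ht)

theorem finite_support_autocorr : (support (autocorr q)).Finite := by
  refine (hq.sub hq).subset fun n hn => ?_
  obtain ⟨k, hk⟩ : ∃ k, q (n + k) * q k ≠ 0 := by
    by_contra! h
    exact hn (by simp [autocorr, h])
  exact ⟨n + k, left_ne_zero_of_mul hk, k, right_ne_zero_of_mul hk, add_sub_cancel_right n k⟩

theorem summable_autocorr_mul (c : ℤ → ℝ) : Summable fun n => autocorr q n * c n :=
  summable_of_hasFiniteSupport ((finite_support_autocorr hq).subset (support_mul_subset_left _ _))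

theorem tsum_comp_sub_mul_eq_sum (u : ℤ → ℝ) (k : ℤ) :
    ∑' j, q (j - k) * u j = ∑ s ∈ hq.toFinset, q s * u (s + k) := by
  rw [← (Equiv.addRight k).tsum_eq]
  simp only [Equiv.coe_addRight, add_sub_cancel_right]
  exact tsum_eq_sum' fun s hs => by
    simpa using left_ne_zero_of_mul (mem_support.1 hs)

theorem tsum_filter_sq_eq_tsum_autocorr_mul {u : ℤ → ℝ} (hu : Summable fun k => u k ^ 2) :
    ∑' k, (∑' j, q (j - k) * u j) ^ 2 = ∑' n, autocorr q n * autocorr u n := by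
  set S := hq.toFinset
  have hS : ∀ s ∉ S, q s = 0 := by simp [S]
  have sum_over_S (t : ℤ) (f : ℤ → ℝ) : ∑ s ∈ S, q s * f s = ∑' n, q (n + t) * f (n + t) :=
    calc ∑ s ∈ S, q s * f s = ∑' s, q s * f s :=
          (tsum_eq_sum fun s hs => by rw [hS s hs, zero_mul]).symm
      _ = ∑' n, q (n + t) * f (n + t) := ((Equiv.addRight t).tsum_eq _).symm
  calc ∑' k, (∑' j, q (j - k) * u j) ^ 2
      = ∑' k, ∑ s ∈ S, ∑ t ∈ S, q s * q t * (u (s + k) * u (t + k)) := by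
        refine tsum_congr fun k => ?_
        rw [tsum_comp_sub_mul_eq_sum hq, sq, Finset.sum_mul_sum]
        exact Finset.sum_congr rfl fun s _ => Finset.sum_congr rfl fun t _ => by ring
    _ = ∑ s ∈ S, ∑ t ∈ S, q s * q t * autocorr u (s - t) := by
        rw [Summable.tsum_finsetSum fun s _ =>
          summable_sum fun t _ => (summable_mul_comp_add hu s t).mul_left _]
        refine Finset.sum_congr rfl fun s _ => ?_
        rw [Summable.tsum_finsetSum fun t _ => (summable_mul_comp_add hu s t).mul_left _]
        refine Finset.sum_congr rfl fun t _ => ?_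
        rw [tsum_mul_left, tsum_mul_comp_add_eq_autocorr]
    _ = ∑ t ∈ S, ∑' n, q (n + t) * q t * autocorr u n := by
        rw [Finset.sum_comm]
        refine Finset.sum_congr rfl fun t _ => ?_
        simp_rw [mul_assoc, sum_over_S t, add_sub_cancel_right]
    _ = ∑' n, autocorr q n * autocorr u n := by
        rw [← Summable.tsum_finsetSum fun t _ => ?_]
        · simp_rw [autocorr_eq_sum hq, Finset.sum_mul]
          rfl
        · refine summable_of_hasFiniteSupport
            ((hq.preimage (add_left_injective t).injOn).subset fun n hn => ?_)
          exact left_ne_zero_of_mul (left_ne_zero_of_mul hn)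

end FinitelySupported

/-- If the finitely supported filters q₁,…,q_m satisfy the UEP condition
∑_l ∑_k q_l[n+k] q_l[k] = δ_n, then the analysis operator W is an isometry on ℓ²(ℤ):
‖Wu‖² = ‖u‖², i.e. ∑_l ∑_k ((S_{q_l[-·]} u)[k])² = ∑_n (u[n])². -/
theorem uep_implies_analysis_isometry
    (m : ℕ) (q : Fin m → ℤ → ℝ)
    (hq : ∀ l, (Function.support (q l)).Finite)
    (huep : ∀ n : ℤ,
      (∑ l : Fin m, ∑' k : ℤ, q l (n + k) * q l k) = if n = 0 then (1 : ℝ) else 0) :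
    ∀ u : ℤ → ℝ, Memℓp u 2 →
      (∑ l : Fin m, ∑' k : ℤ, (∑' j : ℤ, q l (j - k) * u j) ^ 2) = ∑' n : ℤ, (u n) ^ 2 := by
  intro u hu
  have hu2 : Summable fun n => u n ^ 2 := by
    simpa [sq_abs] using hu.summable (by norm_num)
  calc ∑ l, ∑' k, (∑' j, q l (j - k) * u j) ^ 2
      = ∑ l, ∑' n, autocorr (q l) n * autocorr u n :=
        Finset.sum_congr rfl fun l _ => tsum_filter_sq_eq_tsum_autocorr_mul (hq l) hu2
    _ = ∑' n, (∑ l, autocorr (q l) n) * autocorr u n := by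
        rw [← Summable.tsum_finsetSum fun l _ => summable_autocorr_mul (hq l) _]
        simp_rw [Finset.sum_mul]
    _ = ∑' n, (if n = 0 then 1 else 0) * autocorr u n := by
        simp_rw [autocorr, huep]
    _ = ∑' n, u n ^ 2 := by
        simp [autocorr_zero]
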